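/- arXiv:quant-ph/9909080 — 4 statements merged into one kernel-verified Lean document; each statement's English description precedes it below -/
import Mathlib

section
/- In a nondegenerate *-algebra with unity (axioms: complex scalars embed, associative multiplication, scalars commute with all elements, left distributivity, involution with (fg)* = g*f*, (f+g)* = f* + g*, f** = f, and f*f = 0 implies f = 0), the right distributive law (f+g)h = fh + gh holds for all elements f, g, h. -/
theorem right_distrib_of_star_algebra_axioms_general
    {E : Type*} (add mul : E → E → E) (star : E → E)
    (left_distrib : ∀ f g h : E, mul f (add g h) = add (mul f g) (mul f h))
    (star_star : ∀ f : E, star (star f) = f)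
    (star_mul : ∀ f g : E, star (mul f g) = mul (star g) (star f))
    (star_add : ∀ f g : E, star (add f g) = add (star f) (star g)) :
    ∀ f g h : E, mul (add f g) h = add (mul f h) (mul g h) := by
  intro f g h
  apply Function.Involutive.injective star_star
  rw [star_mul, star_add, left_distrib, star_add, star_mul, star_mul]

/-- In a nondegenerate *-algebra with unity (axioms (O1)-(O5), without assuming
commutativity of addition or right distributivity), the right distributive law
`(f+g)h = fh + gh` holds. -/
theorem right_distrib_of_star_algebra_axioms
    {E : Type*} (add mul : E → E → E) (star : E → E) (c : ℂ → E)
    (hc_inj : Function.Injective c)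
    (hc_add : ∀ α β : ℂ, c (α + β) = add (c α) (c β))
    (hc_mul : ∀ α β : ℂ, c (α * β) = mul (c α) (c β))
    (hc_star : ∀ α : ℂ, c (starRingEnd ℂ α) = star (c α))
    (mul_assoc : ∀ f g h : E, mul (mul f g) h = mul f (mul g h))
    (scalar_comm : ∀ (α : ℂ) (f : E), mul (c α) f = mul f (c α))
    (zero_mul : ∀ f : E, mul (c 0) f = c 0)
    (one_mul : ∀ f : E, mul (c 1) f = f)
    (add_assoc : ∀ f g h : E, add (add f g) h = add f (add g h))
    (left_distrib : ∀ f g h : E, mul f (add g h) = add (mul f g) (mul f h))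
    (add_zero : ∀ f : E, add f (c 0) = f)
    (star_star : ∀ f : E, star (star f) = f)
    (star_mul : ∀ f g : E, star (mul f g) = mul (star g) (star f))
    (star_add : ∀ f g : E, star (add f g) = add (star f) (star g))
    (nondeg : ∀ f : E, mul (star f) f = c 0 → f = c 0) :
    ∀ f g h : E, mul (add f g) h = add (mul f h) (mul g h) :=
  right_distrib_of_star_algebra_axioms_general add mul star left_distrib star_star star_mul star_add
end

section
/- In a nondegenerate *-algebra with unity as axiomatized (with left distributivity, scalar commutation, and involution axioms, but without assuming commutativity of addition), addition is commutative: f + g = g + f for all elements f, g. -/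
/-!
Hankel's argument: distributivity of the scalar `2 = 1 + 1` over `f + g` gives
`(f + g) + (f + g) = (f + f) + (g + g)`, and in a group (possibly non-abelian)
cancelling `f` on the left and `g` on the right leaves `g + f = f + g`.
The group structure comes from `-f := (-1) f`, since `f + (-1) f = (1 + (-1)) f = 0 f = 0`.
-/

theorem add_comm_of_add_add_self {G : Type*} [AddGroup G]
    (h : ∀ x y : G, x + y + (x + y) = x + x + (y + y)) (x y : G) : x + y = y + x := by
  have hxy := h x y
  simp only [add_assoc, add_right_inj] at hxy
  simp only [← add_assoc, add_left_inj] at hxy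
  exact hxy.symm

section ScalarAxioms

variable {E : Type*} (add mul : E → E → E) (c : ℂ → E)

theorem scalar_add_mul (hc_add : ∀ α β : ℂ, c (α + β) = add (c α) (c β))
    (scalar_comm : ∀ (α : ℂ) (f : E), mul (c α) f = mul f (c α))
    (left_distrib : ∀ f g h : E, mul f (add g h) = add (mul f g) (mul f h)) (α β : ℂ) (f : E) :
    mul (c (α + β)) f = add (mul (c α) f) (mul (c β) f) := by
  rw [scalar_comm, hc_add, left_distrib, ← scalar_comm, ← scalar_comm]

theorem add_neg_one_scalar_mul_self (hc_add : ∀ α β : ℂ, c (α + β) = add (c α) (c β))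
    (scalar_comm : ∀ (α : ℂ) (f : E), mul (c α) f = mul f (c α))
    (left_distrib : ∀ f g h : E, mul f (add g h) = add (mul f g) (mul f h))
    (zero_mul : ∀ f : E, mul (c 0) f = c 0) (one_mul : ∀ f : E, mul (c 1) f = f) (f : E) :
    add f (mul (c (-1)) f) = c 0 := by
  calc add f (mul (c (-1)) f) = add (mul (c 1) f) (mul (c (-1)) f) := by rw [one_mul]
    _ = mul (c (1 + -1)) f := (scalar_add_mul add mul c hc_add scalar_comm left_distrib ..).symm
    _ = c 0 := by rw [add_neg_cancel, zero_mul]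

theorem two_scalar_mul (hc_add : ∀ α β : ℂ, c (α + β) = add (c α) (c β))
    (scalar_comm : ∀ (α : ℂ) (f : E), mul (c α) f = mul f (c α))
    (left_distrib : ∀ f g h : E, mul f (add g h) = add (mul f g) (mul f h))
    (one_mul : ∀ f : E, mul (c 1) f = f) (f : E) :
    mul (c 2) f = add f f := by
  rw [← one_add_one_eq_two, scalar_add_mul add mul c hc_add scalar_comm left_distrib, one_mul]

end ScalarAxioms

theorem add_comm_of_star_algebra_axioms_general
    {E : Type*} (add mul : E → E → E) (c : ℂ → E)
    (hc_add : ∀ α β : ℂ, c (α + β) = add (c α) (c β))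
    (scalar_comm : ∀ (α : ℂ) (f : E), mul (c α) f = mul f (c α))
    (zero_mul : ∀ f : E, mul (c 0) f = c 0)
    (one_mul : ∀ f : E, mul (c 1) f = f)
    (add_assoc : ∀ f g h : E, add (add f g) h = add f (add g h))
    (left_distrib : ∀ f g h : E, mul f (add g h) = add (mul f g) (mul f h))
    (add_zero : ∀ f : E, add f (c 0) = f) :
    ∀ f g : E, add f g = add g f := by
  let : Add E := ⟨add⟩
  let : Zero E := ⟨c 0⟩
  let : Neg E := ⟨mul (c (-1))⟩
  let : AddGroup E := AddGroup.ofRightAxioms add_assoc add_zero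
    (add_neg_one_scalar_mul_self add mul c hc_add scalar_comm left_distrib zero_mul one_mul)
  have two_mul := two_scalar_mul add mul c hc_add scalar_comm left_distrib one_mul
  refine add_comm_of_add_add_self fun f g => ?_
  calc add (add f g) (add f g) = mul (c 2) (add f g) := (two_mul _).symm
    _ = add (mul (c 2) f) (mul (c 2) g) := left_distrib ..
    _ = add (add f f) (add g g) := by rw [two_mul, two_mul]

/-- In a nondegenerate *-algebra with unity (axioms (O1)-(O5), without assuming
commutativity of addition or right distributivity), addition is commutative: `f + g = g + f`. -/
theorem add_comm_of_star_algebra_axioms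
    {E : Type*} (add mul : E → E → E) (star : E → E) (c : ℂ → E)
    (hc_inj : Function.Injective c)
    (hc_add : ∀ α β : ℂ, c (α + β) = add (c α) (c β))
    (hc_mul : ∀ α β : ℂ, c (α * β) = mul (c α) (c β))
    (hc_star : ∀ α : ℂ, c (starRingEnd ℂ α) = star (c α))
    (mul_assoc : ∀ f g h : E, mul (mul f g) h = mul f (mul g h))
    (scalar_comm : ∀ (α : ℂ) (f : E), mul (c α) f = mul f (c α))
    (zero_mul : ∀ f : E, mul (c 0) f = c 0)
    (one_mul : ∀ f : E, mul (c 1) f = f)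
    (add_assoc : ∀ f g h : E, add (add f g) h = add f (add g h))
    (left_distrib : ∀ f g h : E, mul f (add g h) = add (mul f g) (mul f h))
    (add_zero : ∀ f : E, add f (c 0) = f)
    (star_star : ∀ f : E, star (star f) = f)
    (star_mul : ∀ f g : E, star (mul f g) = mul (star g) (star f))
    (star_add : ∀ f g : E, star (add f g) = add (star f) (star g))
    (nondeg : ∀ f : E, mul (star f) f = c 0 → f = c 0) :
    ∀ f g : E, add f g = add g f :=
  add_comm_of_star_algebra_axioms_general add mul c hc_add scalar_comm zero_mul one_mul add_assoc
    left_distrib add_zero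
end

section
/- Let H be a complex Hilbert space of dimension > 1 and Ψ a set of vectors in H such that any two distinct vectors of Ψ are neither parallel nor orthogonal. Then the set Π₁(Ψ) = { rank-one operators φψ* : φ ∈ H, ψ ∈ Ψ } (viewed in the algebra of bounded operators on H) is closed under left multiplication by arbitrary bounded operators, and any two commuting normal elements of Π₁(Ψ) that also commute with each other's adjoints have a sum in Π₁(Ψ); moreover the identity operator is not in Π₁(Ψ), so Π₁(Ψ) is a valid selection. -/
open scoped InnerProductSpace

/-! A rank-one operator `φψ*` is normal only if `φ` is a multiple of `ψ`, i.e. it is a multiple of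
the projection-like operator `ψψ*`. Evaluating `ψψ* ψ'ψ'* = ψ'ψ'* ψψ*` at `ψ'` shows that for
independent `ψ, ψ'` these commute only if `⟪ψ, ψ'⟫ = 0`; hence two nonzero commuting normal
elements of `Π₁(Ψ)` have the same `ψ`, and their sum is `(φ + φ')ψ*`. The identity is not of rank
one since `dim H > 1`. -/

open InnerProductSpace ContinuousLinearMap

section RankOne

variable {𝕜 E : Type*} [RCLike 𝕜] [NormedAddCommGroup E] [InnerProductSpace 𝕜 E]

variable (𝕜) in
def rankOneSet (Ψ : Set E) : Set (E →L[𝕜] E) :=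
  {T | ∃ φ ψ, ψ ∈ Ψ ∧ T = rankOne 𝕜 φ ψ}

lemma one_ne_rankOne (hE : 1 < Module.rank 𝕜 E) (x y : E) :
    (1 : E →L[𝕜] E) ≠ rankOne 𝕜 x y := by
  intro h
  refine (rank_le_one_iff.2 ⟨x, fun w => ⟨⟪y, w⟫_𝕜, ?_⟩⟩).not_gt hE
  simpa using (congrArg (· w) h).symm

lemma inner_eq_zero_of_commute_rankOne_self {x y : E} (hxy : LinearIndependent 𝕜 ![x, y])
    (h : Commute (rankOne 𝕜 x x) (rankOne 𝕜 y y)) : ⟪x, y⟫_𝕜 = 0 := by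
  have hy : ⟪y, y⟫_𝕜 ≠ 0 := inner_self_ne_zero.2 (hxy.ne_zero 1)
  have h_eval : (⟪x, y⟫_𝕜 * ⟪y, y⟫_𝕜) • x = (⟪y, x⟫_𝕜 * ⟪x, y⟫_𝕜) • y := by
    simpa [mul_def, rankOne_comp_rankOne, smul_smul] using congrArg (· y) h.eq
  exact (mul_eq_zero.1 (hxy.eq_zero_of_pair' h_eval).1).resolve_right hy

lemma mul_mem_rankOneSet {Ψ : Set E} (A : E →L[𝕜] E) {T : E →L[𝕜] E}
    (hT : T ∈ rankOneSet 𝕜 Ψ) : A * T ∈ rankOneSet 𝕜 Ψ := by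
  obtain ⟨φ, ψ, hψ, rfl⟩ := hT
  exact ⟨A φ, ψ, hψ, comp_rankOne φ ψ A⟩

lemma one_notMem_rankOneSet (hE : 1 < Module.rank 𝕜 E) (Ψ : Set E) :
    (1 : E →L[𝕜] E) ∉ rankOneSet 𝕜 Ψ := by
  rintro ⟨φ, ψ, -, h⟩
  exact one_ne_rankOne hE φ ψ h

variable [CompleteSpace E]

lemma exists_rankOne_eq_smul_rankOne_self {x y : E}
    (h : Commute (rankOne 𝕜 x y) (adjoint (rankOne 𝕜 x y))) :
    ∃ c : 𝕜, rankOne 𝕜 x y = c • rankOne 𝕜 y y := by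
  rcases eq_or_ne y 0 with rfl | hy
  · exact ⟨0, by simp⟩
  suffices ∃ c : 𝕜, x = c • y by
    obtain ⟨c, rfl⟩ := this
    exact ⟨c, by simp⟩
  rcases eq_or_ne x 0 with rfl | hx
  · exact ⟨0, by simp⟩
  have hxy : ⟪y, y⟫_𝕜 * ⟪x, x⟫_𝕜 ≠ 0 :=
    mul_ne_zero (inner_self_ne_zero.2 hy) (inner_self_ne_zero.2 hx)
  have h_eval : (⟪y, y⟫_𝕜 * ⟪x, x⟫_𝕜) • x = (⟪x, x⟫_𝕜 * ⟪y, x⟫_𝕜) • y := by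
    simpa [mul_def, rankOne_comp_rankOne, smul_smul] using congrArg (· x) h.eq
  refine ⟨(⟪y, y⟫_𝕜 * ⟪x, x⟫_𝕜)⁻¹ * (⟪x, x⟫_𝕜 * ⟪y, x⟫_𝕜), ?_⟩
  rw [mul_smul, ← h_eval, inv_smul_smul₀ hxy]

lemma add_mem_rankOneSet {Ψ : Set E}
    (hΨ : Ψ.Pairwise fun ψ ψ' => LinearIndependent 𝕜 ![ψ, ψ'] ∧ ⟪ψ, ψ'⟫_𝕜 ≠ 0)
    {S T : E →L[𝕜] E} (hS : S ∈ rankOneSet 𝕜 Ψ) (hT : T ∈ rankOneSet 𝕜 Ψ)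
    (hSS : Commute S (adjoint S)) (hTT : Commute T (adjoint T)) (hST : Commute S T) :
    S + T ∈ rankOneSet 𝕜 Ψ := by
  obtain ⟨φ, ψ, hψ, rfl⟩ := hS
  obtain ⟨φ', ψ', hψ', rfl⟩ := hT
  rcases eq_or_ne ψ ψ' with rfl | hne
  · exact ⟨φ + φ', ψ, hψ, by simp⟩
  obtain ⟨hli, hinner⟩ := hΨ hψ hψ' hne
  obtain ⟨c, hc⟩ := exists_rankOne_eq_smul_rankOne_self hSS
  obtain ⟨c', hc'⟩ := exists_rankOne_eq_smul_rankOne_self hTT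
  rcases eq_or_ne c 0 with rfl | hc0
  · exact ⟨φ', ψ', hψ', by rw [hc, zero_smul, zero_add]⟩
  rcases eq_or_ne c' 0 with rfl | hc'0
  · exact ⟨φ, ψ, hψ, by rw [hc', zero_smul, add_zero]⟩
  rw [hc, hc', Commute.smul_left_iff₀ hc0, Commute.smul_right_iff₀ hc'0] at hST
  exact absurd (inner_eq_zero_of_commute_rankOne_self hli hST) hinner

end RankOne

/-- For a set `Ψ` of pairwise non-parallel, non-orthogonal vectors in a Hilbert
space of dimension `> 1`, the set `Π₁(Ψ)` of rank-one operators `φψ*` with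
`ψ ∈ Ψ` is a valid selection in the algebra of bounded operators. -/
theorem rank_one_set_is_valid_selection
    {H : Type*} [NormedAddCommGroup H] [InnerProductSpace ℂ H] [CompleteSpace H]
    (hdim : 1 < Module.rank ℂ H)
    (Ψ : Set H)
    (hΨ : ∀ ψ ψ' : H, ψ ∈ Ψ → ψ' ∈ Ψ → ψ ≠ ψ' →
      LinearIndependent ℂ ![ψ, ψ'] ∧ ⟪ψ, ψ'⟫_ℂ ≠ 0) :
    (∀ (A T : H →L[ℂ] H),
      T ∈ {T : H →L[ℂ] H | ∃ (φ : H) (ψ : H), ψ ∈ Ψ ∧ T = (innerSL ℂ ψ).smulRight φ} →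
      A * T ∈ {T : H →L[ℂ] H | ∃ (φ : H) (ψ : H), ψ ∈ Ψ ∧ T = (innerSL ℂ ψ).smulRight φ}) ∧
    (∀ S T : H →L[ℂ] H,
      S ∈ {T : H →L[ℂ] H | ∃ (φ : H) (ψ : H), ψ ∈ Ψ ∧ T = (innerSL ℂ ψ).smulRight φ} →
      T ∈ {T : H →L[ℂ] H | ∃ (φ : H) (ψ : H), ψ ∈ Ψ ∧ T = (innerSL ℂ ψ).smulRight φ} →
      Commute S (ContinuousLinearMap.adjoint S) →
      Commute T (ContinuousLinearMap.adjoint T) →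
      Commute S T → Commute S (ContinuousLinearMap.adjoint T) →
      S + T ∈ {T : H →L[ℂ] H | ∃ (φ : H) (ψ : H), ψ ∈ Ψ ∧ T = (innerSL ℂ ψ).smulRight φ}) ∧
    (1 : H →L[ℂ] H) ∉
      {T : H →L[ℂ] H | ∃ (φ : H) (ψ : H), ψ ∈ Ψ ∧ T = (innerSL ℂ ψ).smulRight φ} :=
  ⟨fun A _ hT => mul_mem_rankOneSet A hT,
    fun _ _ hS hT hSS hTT hST _ =>
      add_mem_rankOneSet (fun _ hψ _ hψ' hne => hΨ _ _ hψ hψ' hne) hS hT hSS hTT hST,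
    one_notMem_rankOneSet hdim Ψ⟩
end

section
/- Let ≈ be a relation on a unital *-algebra E satisfying reflexivity, symmetry, transitivity, stability under adding elements to both sides, and stability under left multiplication, and suppose 1 ≈ 0 does not hold. If e is an event (e² = e = e*) and e ≈ λ for some complex number λ, then λ = 0 or λ = 1. -/
/-!
Multiplying `e ≈ λ` on the left by `e` and by `λ` gives `e = e² ≈ eλ = λe ≈ λ²`, hence `λ ≈ λ²`,
i.e. `0 ≈ λ² - λ`. If `λ² ≠ λ`, multiplying by the scalar `(λ² - λ)⁻¹` yields `0 ≈ 1`.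
-/

section

variable {K E : Type*} [Field K] [Ring E] [Algebra K E] {r : E → E → Prop}

theorem rel_zero_sub_of_rel (R4 : ∀ f g h : E, r f g → r (f + h) (g + h))
    {a b : E} (hab : r a b) : r 0 (b - a) := by
  simpa [sub_eq_add_neg] using R4 a b (-a) hab

theorem rel_one_zero_of_rel_zero_algebraMap (R2 : ∀ f g : E, r f g → r g f)
    (R5 : ∀ f g h : E, r f g → r (h * f) (h * g))
    {c : K} (hc : c ≠ 0) (h : r 0 (algebraMap K E c)) : r 1 0 := by
  have h' := R5 _ _ (algebraMap K E c⁻¹) h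
  rw [mul_zero, ← map_mul, inv_mul_cancel₀ hc, map_one] at h'
  exact R2 _ _ h'

theorem rel_algebraMap_mul_self_of_isIdempotentElem (R2 : ∀ f g : E, r f g → r g f)
    (R3 : ∀ f g h : E, r f g → r g h → r f h) (R5 : ∀ f g h : E, r f g → r (h * f) (h * g))
    {e : E} (he : IsIdempotentElem e) {c : K} (h : r e (algebraMap K E c)) :
    r (algebraMap K E c) (algebraMap K E (c * c)) := by
  have h_e : r e (algebraMap K E c * e) := by
    simpa only [he.eq, Algebra.commutes] using R5 _ _ e h
  have h_c : r (algebraMap K E c * e) (algebraMap K E (c * c)) := by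
    simpa only [map_mul] using R5 _ _ (algebraMap K E c) h
  exact R3 _ _ _ (R2 _ _ h) (R3 _ _ _ h_e h_c)

end

theorem event_weakly_equal_scalar_general
    {E : Type*} [Ring E] [Algebra ℂ E]
    (r : E → E → Prop)
    (R2 : ∀ f g : E, r f g → r g f)
    (R3 : ∀ f g h : E, r f g → r g h → r f h)
    (R4 : ∀ f g h : E, r f g → r (f + h) (g + h))
    (R5 : ∀ f g h : E, r f g → r (h * f) (h * g))
    (hcons : ¬ r 1 0)
    (e : E) (he_idem : e * e = e)
    (lam : ℂ) (h : r e (algebraMap ℂ E lam)) :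
    lam = 0 ∨ lam = 1 := by
  refine IsIdempotentElem.iff_eq_zero_or_one.mp (by_contra fun hne => hcons ?_)
  have h_sq := rel_algebraMap_mul_self_of_isIdempotentElem R2 R3 R5 he_idem h
  have h_sub : r 0 (algebraMap ℂ E (lam * lam - lam)) := by
    simpa only [map_sub] using rel_zero_sub_of_rel R4 h_sq
  exact rel_one_zero_of_rel_zero_algebraMap R2 R5 (sub_ne_zero.mpr hne) h_sub

/-- If a consistent logically closed statement `≈` implies `e ≈ λ` for an event
`e`, then `λ = 0` or `λ = 1`. -/
theorem event_weakly_equal_scalar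
    {E : Type*} [Ring E] [StarRing E] [Algebra ℂ E]
    (r : E → E → Prop)
    (R1 : ∀ f : E, r f f)
    (R2 : ∀ f g : E, r f g → r g f)
    (R3 : ∀ f g h : E, r f g → r g h → r f h)
    (R4 : ∀ f g h : E, r f g → r (f + h) (g + h))
    (R5 : ∀ f g h : E, r f g → r (h * f) (h * g))
    (hcons : ¬ r 1 0)
    (e : E) (he_idem : e * e = e) (he_star : star e = e)
    (lam : ℂ) (h : r e (algebraMap ℂ E lam)) :
    lam = 0 ∨ lam = 1 :=
  event_weakly_equal_scalar_general r R2 R3 R4 R5 hcons e he_idem lam h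
end
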